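/- Let B be an invertible upper triangular real m×m matrix with positive diagonal entries and set C = B^T B. Then for any positive definite real symmetric m×m matrix A and κ ∈ ℝ^m, q_κ(B^T A B) = q_κ(C)·q_κ(A). -/

import Mathlib

open MeasureTheory Matrix BigOperators Real

noncomputable section

/-- Determinant of the leading `p × p` principal submatrix. -/
def leadDet {m : ℕ} (A : Matrix (Fin m) (Fin m) ℝ) (p : ℕ) (h : p ≤ m) : ℝ :=
  (A.submatrix (fun i : Fin p => Fin.castLE h i) (fun i : Fin p => Fin.castLE h i)).det

/-- Generalized power `q_κ(A) = |A_m|^{k_m} ∏_{i<m} |A_i|^{k_i - k_{i+1}}`. -/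
def qpow {m : ℕ} (κ : Fin m → ℝ) (A : Matrix (Fin m) (Fin m) ℝ) : ℝ :=
  ∏ i : Fin m, leadDet A ((i : ℕ) + 1) i.isLt ^
    (κ i - if h : (i : ℕ) + 1 < m then κ ⟨(i : ℕ) + 1, h⟩ else 0)

/-! Since `B` is upper triangular, the leading `p × p` block of `Bᵀ A B` is `B_pᵀ A_p B_p`, so every
leading minor of `Bᵀ A B` factors as `|B_p|² |A_p|`, and the matching minor of `Bᵀ B` is `|B_p|²`.
Both factors are nonnegative, so the factorisation survives the real powers defining `q_κ`. -/

namespace Matrix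

variable {R : Type*} [NonUnitalNonAssocCommSemiring R] {m p : ℕ}

lemma submatrix_castLE_mul_of_isUpperTriangular {l n : Type*} (h : p ≤ m)
    (M : Matrix n (Fin m) R) {N : Matrix (Fin m) (Fin m) R} (hN : N.IsUpperTriangular)
    (f : l → n) :
    (M * N).submatrix f (Fin.castLE h) =
      M.submatrix f (Fin.castLE h) * N.submatrix (Fin.castLE h) (Fin.castLE h) := by
  ext i j
  refine (Fintype.sum_of_injective _ (Fin.castLE_injective h)
    (fun k => M (f i) (Fin.castLE h k) * N (Fin.castLE h k) (Fin.castLE h j)) _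
    (fun k hk => ?_) fun _ => rfl).symm
  have hjk : Fin.castLE h j < k := by
    by_contra! hkj
    exact hk ⟨⟨k, (Fin.le_def.mp hkj).trans_lt j.isLt⟩, rfl⟩
  exact mul_eq_zero_of_right _ (hN hjk)

lemma submatrix_castLE_transpose_mul_of_isUpperTriangular {l n : Type*} (h : p ≤ m)
    (M : Matrix (Fin m) n R) {N : Matrix (Fin m) (Fin m) R} (hN : N.IsUpperTriangular)
    (f : l → n) :
    (Nᵀ * M).submatrix (Fin.castLE h) f =
      (N.submatrix (Fin.castLE h) (Fin.castLE h))ᵀ * M.submatrix (Fin.castLE h) f := by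
  rw [← transpose_transpose (Nᵀ * M), transpose_mul, transpose_transpose, ← transpose_submatrix,
    submatrix_castLE_mul_of_isUpperTriangular h _ hN, transpose_mul]
  rfl

end Matrix

section LeadDet

variable {m p : ℕ}

lemma leadDet_eq_det_submatrix (A : Matrix (Fin m) (Fin m) ℝ) (h : p ≤ m) :
    leadDet A p h = (A.submatrix (Fin.castLE h) (Fin.castLE h)).det :=
  rfl

lemma leadDet_nonneg {A : Matrix (Fin m) (Fin m) ℝ} (hA : A.PosSemidef) (h : p ≤ m) :
    0 ≤ leadDet A p h :=
  (hA.submatrix (Fin.castLE h)).det_nonneg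

lemma leadDet_one (h : p ≤ m) : leadDet (1 : Matrix (Fin m) (Fin m) ℝ) p h = 1 := by
  rw [leadDet_eq_det_submatrix, submatrix_one _ (Fin.castLE_injective h), det_one]

lemma leadDet_transpose_mul_mul {B : Matrix (Fin m) (Fin m) ℝ} (hB : B.IsUpperTriangular)
    (A : Matrix (Fin m) (Fin m) ℝ) (h : p ≤ m) :
    leadDet (Bᵀ * A * B) p h = leadDet B p h ^ 2 * leadDet A p h := by
  simp only [leadDet_eq_det_submatrix]
  rw [submatrix_castLE_mul_of_isUpperTriangular h _ hB,
    submatrix_castLE_transpose_mul_of_isUpperTriangular h _ hB, det_mul, det_mul, det_transpose]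
  ring

end LeadDet

lemma qpow_eq_mul_of_leadDet_eq_mul {m : ℕ} (κ : Fin m → ℝ) {M N P : Matrix (Fin m) (Fin m) ℝ}
    (hN : ∀ p h, 0 ≤ leadDet N p h) (hP : ∀ p h, 0 ≤ leadDet P p h)
    (hM : ∀ p h, leadDet M p h = leadDet N p h * leadDet P p h) :
    qpow κ M = qpow κ N * qpow κ P := by
  simp only [qpow, ← Finset.prod_mul_distrib, hM, Real.mul_rpow (hN _ _) (hP _ _)]

theorem qpow_conj_general {m : ℕ} (κ : Fin m → ℝ)
    (A B : Matrix (Fin m) (Fin m) ℝ)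
    (hA : A.PosDef) (hB : B.BlockTriangular id) :
    qpow κ (Bᵀ * A * B) = qpow κ (Bᵀ * B) * qpow κ A := by
  have hC : ∀ p h, leadDet (Bᵀ * B) p h = leadDet B p h ^ 2 := fun p h => by
    simpa [leadDet_one] using leadDet_transpose_mul_mul hB 1 h
  refine qpow_eq_mul_of_leadDet_eq_mul κ (fun p h => hC p h ▸ sq_nonneg _)
    (fun _ => leadDet_nonneg hA.posSemidef) (fun p h => ?_)
  rw [hC, leadDet_transpose_mul_mul hB]

/-- `q_κ(BᵀAB) = q_κ(C) q_κ(A)` for `C = BᵀB`, `B` invertible upper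
triangular with positive diagonal. -/
theorem qpow_conj {m : ℕ} (κ : Fin m → ℝ)
    (A B : Matrix (Fin m) (Fin m) ℝ)
    (hA : A.PosDef) (hB : B.BlockTriangular id) (hBdiag : ∀ i, 0 < B i i)
    (hBinv : IsUnit B.det) :
    qpow κ (Bᵀ * A * B) = qpow κ (Bᵀ * B) * qpow κ A :=
  qpow_conj_general κ A B hA hB

end
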